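/- For ξ = (x,y,t) and η = (u,v,s) in ℍⁿ with z = x+iy, w = u+iv, the derivative at r = 1 of r ↦ |η⁻¹ δ_r(ξ)|⁴ equals 4|z−w|²[x·(x−u) + y·(y−v)] + 4(t − s + 2(y·u − x·v))(t + (y·u − x·v)), where the dots denote Euclidean inner products in ℝⁿ. -/

import Mathlib

open MeasureTheory Filter Set
open scoped BigOperators ENNReal NNReal Real Topology

noncomputable section

/-- The Heisenberg group `ℍⁿ = ℂⁿ × ℝ` (as a set, with Euclidean structure on `ℂⁿ`). -/
abbrev Hgrp (n : ℕ) : Type := EuclideanSpace ℂ (Fin n) × ℝ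

/-- Heisenberg group multiplication `(z,t)(w,s) = (z+w, t+s+2 Im (z ⬝ conj w))`. -/
def hmul {n : ℕ} (ξ η : Hgrp n) : Hgrp n :=
  (ξ.1 + η.1, ξ.2 + η.2 + 2 * (∑ j, ξ.1 j * (starRingEnd ℂ) (η.1 j)).im)

/-- Heisenberg group inverse `(z,t)⁻¹ = (-z,-t)`. -/
def hinv {n : ℕ} (ξ : Hgrp n) : Hgrp n := (-ξ.1, -ξ.2)

/-- Anisotropic dilations `δ_r(z,t) = (rz, r²t)`. -/
def dil {n : ℕ} (r : ℝ) (ξ : Hgrp n) : Hgrp n := (r • ξ.1, r ^ 2 * ξ.2)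

/-- Homogeneous norm `|(z,t)| = (|z|⁴ + t²)^{1/4}`. -/
def hnorm {n : ℕ} (ξ : Hgrp n) : ℝ := (‖ξ.1‖ ^ 4 + ξ.2 ^ 2) ^ ((1 : ℝ) / 4)

/-- Homogeneous dimension `Q = 2n+2` (as a real number). -/
def Qdim (n : ℕ) : ℝ := 2 * n + 2

instance (n : ℕ) : MeasurableSpace (EuclideanSpace ℂ (Fin n)) :=
  MeasurableSpace.comap WithLp.ofLp (inferInstanceAs (MeasurableSpace (∀ _ : Fin n, ℂ)))

instance (n : ℕ) : MeasureSpace (EuclideanSpace ℂ (Fin n)) :=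
  ⟨Measure.map (WithLp.toLp 2) (volume : Measure (∀ _ : Fin n, ℂ))⟩

/-!
For `ξ = (z, t)` and `η = (w, s)` the group law gives
`η⁻¹ δ_r(ξ) = (r z - w, r²t - s + 2r Im⟪w, z⟫)`, so `|η⁻¹ δ_r(ξ)|⁴` is the sum of
`‖r z - w‖⁴` and the square of a quadratic polynomial in `r`, each differentiated directly.
In the statement, `x·(x-u) + y·(y-v) = ⟪z - w, z⟫_ℝ` and `y·u - x·v = Im⟪w, z⟫_ℂ`.
-/

open scoped InnerProductSpace ComplexConjugate

theorem sum_mul_conj_eq_inner {n : ℕ} (z w : EuclideanSpace ℂ (Fin n)) :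
    ∑ j, z j * conj (w j) = ⟪w, z⟫_ℂ := by
  simp [PiLp.inner_apply]

theorem re_sum_mul_conj_eq_real_inner {n : ℕ} (z w : EuclideanSpace ℂ (Fin n)) :
    (∑ j, z j * conj (w j)).re = ⟪w, z⟫_ℝ := by
  simp [PiLp.inner_apply, Complex.inner, Complex.re_sum]

theorem hnorm_pow_four {n : ℕ} (ξ : Hgrp n) : hnorm ξ ^ 4 = ‖ξ.1‖ ^ 4 + ξ.2 ^ 2 := by
  rw [hnorm, ← Real.rpow_natCast, ← Real.rpow_mul (by positivity)]
  norm_num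

theorem hmul_hinv_dil {n : ℕ} (η ξ : Hgrp n) (r : ℝ) :
    hmul (hinv η) (dil r ξ) =
      (r • ξ.1 - η.1, r ^ 2 * ξ.2 - η.2 + 2 * r * (⟪η.1, ξ.1⟫_ℂ).im) := by
  have him : (⟪r • ξ.1, -η.1⟫_ℂ).im = r * (⟪η.1, ξ.1⟫_ℂ).im := by
    rw [inner_neg_right, inner_smul_left_eq_smul, ← inner_conj_symm ξ.1 η.1]
    simp only [Complex.neg_im, Complex.real_smul, Complex.im_ofReal_mul, Complex.conj_im]
    ring
  ext1
  · simp [hmul, hinv, dil, neg_add_eq_sub]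
  · simp only [hmul, hinv, dil, sum_mul_conj_eq_inner, him]
    ring

theorem hasDerivAt_norm_smul_sub_pow_four {F : Type*} [NormedAddCommGroup F]
    [InnerProductSpace ℝ F] (z w : F) (x : ℝ) :
    HasDerivAt (fun r : ℝ => ‖r • z - w‖ ^ 4) (4 * ‖x • z - w‖ ^ 2 * ⟪x • z - w, z⟫_ℝ) x := by
  have h := (((hasDerivAt_id' x).smul_const z).sub_const w).norm_sq.fun_pow 2
  rw [one_smul] at h
  simp only [show ∀ a : ℝ, a ^ 4 = (a ^ 2) ^ 2 by intro a; ring]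
  exact h.congr_deriv (by push_cast; ring)

theorem hasDerivAt_quadratic_sq (a b c x : ℝ) :
    HasDerivAt (fun r : ℝ => (a * r ^ 2 + b * r + c) ^ 2)
      (2 * (a * x ^ 2 + b * x + c) * (2 * a * x + b)) x := by
  have h := ((((hasDerivAt_pow 2 x).const_mul a).fun_add
    ((hasDerivAt_id' x).const_mul b)).add_const c).fun_pow 2
  exact h.congr_deriv (by push_cast; ring)

/-- Derivative at `r = 1` of `r ↦ |η⁻¹ δ_r(ξ)|⁴`. -/
theorem stmt5 (n : ℕ) (ξ η : Hgrp n) :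
    HasDerivAt (fun r : ℝ => hnorm (hmul (hinv η) (dil r ξ)) ^ 4)
      (4 * ‖ξ.1 - η.1‖ ^ 2 * (∑ j, ξ.1 j * (starRingEnd ℂ) (ξ.1 j - η.1 j)).re
        + 4 * (ξ.2 - η.2 + 2 * (∑ j, ξ.1 j * (starRingEnd ℂ) (η.1 j)).im)
            * (ξ.2 + (∑ j, ξ.1 j * (starRingEnd ℂ) (η.1 j)).im)) 1 := by
  set K := (⟪η.1, ξ.1⟫_ℂ).im
  have hexpand : (fun r : ℝ => hnorm (hmul (hinv η) (dil r ξ)) ^ 4) =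
      fun r => ‖r • ξ.1 - η.1‖ ^ 4 + (ξ.2 * r ^ 2 + 2 * K * r + -η.2) ^ 2 := by
    ext r
    rw [hnorm_pow_four, hmul_hinv_dil]
    ring
  have hre := re_sum_mul_conj_eq_real_inner ξ.1 (ξ.1 - η.1)
  simp only [PiLp.sub_apply] at hre
  rw [hexpand, hre, sum_mul_conj_eq_inner]
  refine ((hasDerivAt_norm_smul_sub_pow_four ξ.1 η.1 1).fun_add
    (hasDerivAt_quadratic_sq ξ.2 (2 * K) (-η.2) 1)).congr_deriv ?_
  rw [one_smul]
  ring
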